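/- Let I = (w₁,u₁),…,(wₙ,uₙ) be a PCP instance over Σ and let ⊥ ∉ Σ be a fresh symbol. Define L₁ = {(w_{i₁}⋯w_{iₗ}·⊥^ω, u_{i₁}⋯u_{iₗ}·⊥^ω) : l ≥ 1, i₁,…,iₗ ∈ {1,…,n}} and L₂ = {(v·⊥^ω, v·⊥^ω) : v a finite word over Σ}. Then (i) L₁ and L₂ are each recognized by a NAPA over Σ ∪ {⊥} with two directions, and (ii) I has a solution if and only if L₁ ∩ L₂ ≠ ∅. -/

import Mathlib

/-!
Both automata are instances of one construction. Given tiles `(u_j, v_j)`, a nondeterministic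
automaton guesses a sequence of tiles and checks the unread letters of the current tile against
the two tapes, one letter per step in either direction; between two tiles it may instead read `⊥`
and enter a loop that reads `⊥` alternately from both tapes. Checking states have priority 1 and
the loop priority 0, so a run accepts iff it reaches the loop, i.e. iff the tapes are
`u_{j₁}⋯u_{jₗ}⊥^ω` and `v_{j₁}⋯v_{jₗ}⊥^ω` for the guessed sequence. The PCP tiles, with the first
tile forced by the initial formula, give `L₁`; the tiles `(a, a)` for `a ∈ σ` give `L₂`. Since the
automaton is nondeterministic, its runs can be traded for single accepting sequences of
configurations, and both inclusions are argued on those. Part (ii) is injectivity of padding.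
-/

/-! ### Positive Boolean formulas -/

/-- Positive Boolean formulas over a set of atoms `Q`, built from atoms,
conjunction, disjunction and the constants true and false. -/
inductive PosBool (Q : Type u) : Type u
  | tt : PosBool Q
  | ff : PosBool Q
  | var : Q → PosBool Q
  | and : PosBool Q → PosBool Q → PosBool Q
  | or : PosBool Q → PosBool Q → PosBool Q

namespace PosBool

/-- `Sat C f` holds iff the valuation making exactly the elements of `C` true satisfies `f`. -/
def Sat {Q : Type u} (C : Set Q) : PosBool Q → Prop
  | tt => True
  | ff => False
  | var q => q ∈ C
  | and f g => Sat C f ∧ Sat C g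
  | or f g => Sat C f ∨ Sat C g

/-- A positive Boolean formula that is a disjunction of atoms. -/
inductive IsDisj {Q : Type u} : PosBool Q → Prop
  | ff : IsDisj ff
  | var (q : Q) : IsDisj (var q)
  | or {f g : PosBool Q} : IsDisj f → IsDisj g → IsDisj (f.or g)

/-- Syntactic size of a positive Boolean formula. -/
def size {Q : Type u} : PosBool Q → ℕ
  | tt => 1
  | ff => 1
  | var _ => 1
  | and f g => size f + size g + 1
  | or f g => size f + size g + 1

end PosBool

/-! ### Alternating Asynchronous Parity Automata -/

/-- An Alternating Asynchronous Parity Automaton (AAPA) over the alphabet `σ`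
with state set `Q` and `n` directions. -/
structure AAPA (σ : Type u) (Q : Type v) (n : ℕ) where
  init : PosBool Q
  trans : Q → σ → Fin n → PosBool Q
  prio : Q → ℕ

namespace AAPA

variable {σ : Type u} {Q : Type v} {n : ℕ}

/-- A run of an AAPA `A` on the tuple of `ω`-words `w`: a tree of nodes
(coded as lists of natural numbers, the root being `[]`), whose non-root nodes
are labeled with states and which carry offset counters, subject to the
local consistency conditions of AAPA runs. -/
structure Run (A : AAPA σ Q n) (w : Fin n → ℕ → σ) where
  tree : Set (List ℕ)
  label : List ℕ → Q
  cnt : List ℕ → Fin n → ℕ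
  root_mem : [] ∈ tree
  prefix_closed : ∀ (t : List ℕ) (m : ℕ), t ++ [m] ∈ tree → t ∈ tree
  has_child : ∀ t ∈ tree, ∃ m : ℕ, t ++ [m] ∈ tree
  cnt_init : ∀ t ∈ tree, t.length ≤ 1 → cnt t = 0
  init_sat : PosBool.Sat {q | ∃ m : ℕ, [m] ∈ tree ∧ label [m] = q} A.init
  step : ∀ t ∈ tree, t ≠ [] → ∃ d : Fin n,
    (∀ m : ℕ, t ++ [m] ∈ tree →
      cnt (t ++ [m]) = Function.update (cnt t) d (cnt t d + 1)) ∧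
    PosBool.Sat {q | ∃ m : ℕ, t ++ [m] ∈ tree ∧ label (t ++ [m]) = q}
      (A.trans (label t) (w d (cnt t d)) d)

variable {A : AAPA σ Q n} {w : Fin n → ℕ → σ}

/-- An infinite path through a run, starting at the root. -/
def Run.IsPath (r : A.Run w) (p : ℕ → List ℕ) : Prop :=
  p 0 = [] ∧ ∀ i : ℕ, (∃ m : ℕ, p (i + 1) = p i ++ [m]) ∧ p (i + 1) ∈ r.tree

/-- A run is accepting iff on every infinite path the least priority occurring
infinitely often is even. -/
def Run.Accepting (r : A.Run w) : Prop :=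
  ∀ p : ℕ → List ℕ, r.IsPath p →
    Even (sInf {c : ℕ | ∀ N : ℕ, ∃ i : ℕ, N ≤ i ∧ A.prio (r.label (p i)) = c})

/-- The language of an AAPA: the set of tuples of `ω`-words on which it has an
accepting run. -/
def lang (A : AAPA σ Q n) : Set (Fin n → ℕ → σ) :=
  {w | ∃ r : A.Run w, r.Accepting}

/-- A Nondeterministic Asynchronous Parity Automaton (NAPA) is an AAPA whose
initial condition and transitions are disjunctions of states. -/
def IsNondet (A : AAPA σ Q n) : Prop :=
  A.init.IsDisj ∧ ∀ (q : Q) (a : σ) (d : Fin n), (A.trans q a d).IsDisj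

end AAPA

/-! ### The Post Correspondence Problem -/

/-- Pad a finite word to an `ω`-word over `Option σ`, where `none` plays the role
of the fresh symbol `⊥`: the word `v` followed by `⊥^ω`. -/
def padWord {σ : Type u} (v : List σ) : ℕ → Option σ := fun i => v[i]?

/-- A solution of a PCP instance: a nonempty index sequence `i₁,…,iₗ` with
`w_{i₁}⋯w_{iₗ} = u_{i₁}⋯u_{iₗ}`. -/
def PCPSolvable {σ : Type u} (I : List (List σ × List σ)) : Prop :=
  ∃ js : List (Fin I.length), js ≠ [] ∧
    (js.map fun j => (I.get j).1).flatten = (js.map fun j => (I.get j).2).flatten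

/-- The language `L₁` of a PCP instance: pairs of padded concatenations of the
first and second components along a common nonempty index sequence. -/
def pcpL₁ {σ : Type u} (I : List (List σ × List σ)) : Set (Fin 2 → ℕ → Option σ) :=
  {w | ∃ js : List (Fin I.length), js ≠ [] ∧
    w 0 = padWord ((js.map fun j => (I.get j).1).flatten) ∧
    w 1 = padWord ((js.map fun j => (I.get j).2).flatten)}

/-- The language `L₂`: pairs consisting of the same padded finite word twice. -/
def pcpL₂ (σ : Type u) : Set (Fin 2 → ℕ → Option σ) :=
  {w | ∃ v : List σ, w 0 = padWord v ∧ w 1 = padWord v}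


namespace PosBool

variable {Q : Type*}

theorem Sat.mono {C C' : Set Q} (h : C ⊆ C') {f : PosBool Q} (hf : Sat C f) : Sat C' f := by
  induction f with
  | tt | ff => exact hf
  | var q => exact h hf
  | and f g ihf ihg => exact ⟨ihf hf.1, ihg hf.2⟩
  | or f g ihf ihg => exact hf.imp ihf ihg

theorem IsDisj.exists_sat_singleton {f : PosBool Q} (hf : f.IsDisj) {C : Set Q} (h : Sat C f) :
    ∃ q ∈ C, Sat {q} f := by
  induction hf with
  | ff => exact h.elim
  | var q => exact ⟨q, h, rfl⟩
  | or _ _ ihf ihg =>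
    rcases h with h | h
    · obtain ⟨q, hq, hf⟩ := ihf h
      exact ⟨q, hq, Or.inl hf⟩
    · obtain ⟨q, hq, hg⟩ := ihg h
      exact ⟨q, hq, Or.inr hg⟩

theorem sat_singleton_var {q q' : Q} : Sat {q'} (var q) ↔ q = q' := Iff.rfl

theorem sat_ite_ff {p : Prop} {_ : Decidable p} {f : PosBool Q} {C : Set Q} :
    Sat C (if p then f else ff) ↔ p ∧ Sat C f := by
  split_ifs with hp
  · exact (and_iff_right hp).symm
  · exact ⟨False.elim, fun h => (hp h.1).elim⟩

theorem IsDisj.ite_ff {p : Prop} {_ : Decidable p} {f : PosBool Q} (hf : f.IsDisj) :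
    (if p then f else .ff).IsDisj := by
  split_ifs
  exacts [hf, .ff]

def bigOr {α : Type*} (l : List α) (g : α → PosBool Q) : PosBool Q :=
  l.foldr (fun a f => (g a).or f) ff

variable {α : Type*} {l : List α} {g : α → PosBool Q}

theorem sat_bigOr {C : Set Q} : Sat C (bigOr l g) ↔ ∃ a ∈ l, Sat C (g a) := by
  induction l with
  | nil => simp [bigOr, Sat]
  | cons a l ih =>
    change Sat C (g a) ∨ Sat C (bigOr l g) ↔ _
    simp [ih]

theorem IsDisj.bigOr (h : ∀ a ∈ l, (g a).IsDisj) : (bigOr l g).IsDisj := by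
  induction l with
  | nil => exact .ff
  | cons a l ih => exact .or (h a (by simp)) (ih fun b hb => h b (by simp [hb]))

end PosBool

def infOcc (f : ℕ → ℕ) : Set ℕ := {c | ∀ N, ∃ i, N ≤ i ∧ f i = c}

theorem infOcc_comp_succ (f : ℕ → ℕ) : infOcc (fun i => f (i + 1)) = infOcc f := by
  ext c
  constructor
  · intro h N
    obtain ⟨i, hi, rfl⟩ := h N
    exact ⟨i + 1, by omega, rfl⟩
  · intro h N
    obtain ⟨i, hi, rfl⟩ := h (N + 1)
    obtain ⟨j, rfl⟩ : ∃ j, i = j + 1 := ⟨i - 1, by omega⟩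
    exact ⟨j, by omega, rfl⟩

theorem infOcc_const (a : ℕ) : infOcc (fun _ => a) = {a} :=
  Set.ext fun _ => ⟨fun h => (h 0).choose_spec.2.symm, fun h N => ⟨N, le_rfl, h.symm⟩⟩

theorem exists_seq_of_forall_exists_rel {α : Type*} {P : α → Prop} {R : α → α → Prop}
    (h : ∀ a, P a → ∃ b, P b ∧ R a b) {a : α} (ha : P a) :
    ∃ f : ℕ → α, f 0 = a ∧ ∀ k, P (f k) ∧ R (f k) (f (k + 1)) := by
  choose! g hgP hgR using h
  have hP : ∀ k, P (g^[k] a) := fun k => by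
    induction k with
    | zero => exact ha
    | succ k ih => rw [Function.iterate_succ_apply']; exact hgP _ ih
  refine ⟨fun k => g^[k] a, rfl, fun k => ⟨hP k, ?_⟩⟩
  show R (g^[k] a) (g^[k + 1] a)
  rw [Function.iterate_succ_apply']
  exact hgR _ (hP k)

namespace AAPA

variable {σ Q : Type*} {n : ℕ} (A : AAPA σ Q n) (w : Fin n → ℕ → σ)

def Step (x y : Q × (Fin n → ℕ)) : Prop :=
  ∃ d, y.2 = Function.update x.2 d (x.2 d + 1) ∧
    PosBool.Sat {y.1} (A.trans x.1 (w d (x.2 d)) d)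

def AcceptsFrom (x : Q × (Fin n → ℕ)) : Prop :=
  ∃ tr : ℕ → Q × (Fin n → ℕ), tr 0 = x ∧ (∀ k, A.Step w (tr k) (tr (k + 1))) ∧
    Even (sInf (infOcc fun k => A.prio (tr k).1))

variable {A w}

theorem le_update_add_one (c : Fin n → ℕ) (d : Fin n) : c ≤ Function.update c d (c d + 1) :=
  le_update_iff.2 ⟨Nat.le_succ _, fun _ _ => le_rfl⟩

theorem AcceptsFrom.of_step {x y : Q × (Fin n → ℕ)} (hxy : A.Step w x y)
    (hy : A.AcceptsFrom w y) : A.AcceptsFrom w x := by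
  obtain ⟨tr, h0, hstep, hacc⟩ := hy
  refine ⟨fun k => match k with | 0 => x | k + 1 => tr k, rfl, fun k => ?_, ?_⟩
  · cases k with
    | zero => show A.Step w x (tr 0); rw [h0]; exact hxy
    | succ k => exact hstep k
  · rw [← infOcc_comp_succ]
    exact hacc

theorem acceptsFrom_of_forall_exists_step (P : Q × (Fin n → ℕ) → Prop)
    (hstep : ∀ x, P x → ∃ y, P y ∧ A.Step w x y) (hprio : ∀ x, P x → A.prio x.1 = 0)
    {x : Q × (Fin n → ℕ)} (hx : P x) : A.AcceptsFrom w x := by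
  obtain ⟨tr, h0, htr⟩ := exists_seq_of_forall_exists_rel hstep hx
  refine ⟨tr, h0, fun k => (htr k).2, ?_⟩
  rw [show (fun k => A.prio (tr k).1) = fun _ => 0 from funext fun k => hprio _ (htr k).1,
    infOcc_const, csInf_singleton]
  exact ⟨0, rfl⟩

/-- The run made of the single branch `[0, 0, …]`, whose node of depth `k + 1` carries `tr k`. -/
def Run.ofTrace {q : Q} (hq : PosBool.Sat {q} A.init) (tr : ℕ → Q × (Fin n → ℕ))
    (h0 : tr 0 = (q, 0)) (hstep : ∀ k, A.Step w (tr k) (tr (k + 1))) : A.Run w where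
  tree := {t | ∀ m ∈ t, m = 0}
  label t := (tr (t.length - 1)).1
  cnt t := (tr (t.length - 1)).2
  root_mem := by simp
  prefix_closed _ _ h x hx := h x (List.mem_append_left _ hx)
  has_child _ ht := ⟨0, by simpa [or_imp, forall_and] using ht⟩
  cnt_init _ _ ht := by rw [Nat.sub_eq_zero_of_le ht, h0]
  init_sat := hq.mono <| Set.singleton_subset_iff.2 (by exact ⟨0, by simp, by simp [h0]⟩)
  step t ht hne := by
    obtain ⟨k, hk⟩ := Nat.exists_eq_add_one.2 (List.length_pos_iff.2 hne)
    obtain ⟨d, hc, hsat⟩ := hstep k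
    refine ⟨d, fun m _ => by simpa [hk] using hc, ?_⟩
    simp only [hk, Nat.add_sub_cancel]
    exact hsat.mono <| Set.singleton_subset_iff.2
      (by exact ⟨0, by simpa [or_imp, forall_and] using ht, by simp [hk]⟩)

theorem mem_lang_of_acceptsFrom {q : Q} (hq : PosBool.Sat {q} A.init)
    (h : A.AcceptsFrom w (q, 0)) : w ∈ A.lang := by
  obtain ⟨tr, h0, hstep, hacc⟩ := h
  refine ⟨Run.ofTrace hq tr h0 hstep, fun p hp => ?_⟩
  have hlen : ∀ i, (p i).length = i := fun i => by
    induction i with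
    | zero => rw [hp.1]; rfl
    | succ i ih =>
      obtain ⟨m, hm⟩ := (hp.2 i).1
      simp [hm, ih]
  change Even (sInf (infOcc fun i => A.prio ((Run.ofTrace hq tr h0 hstep).label (p i))))
  rw [← infOcc_comp_succ]
  simpa [Run.ofTrace, hlen] using hacc

theorem exists_acceptsFrom_of_mem_lang (hA : A.IsNondet) (hw : w ∈ A.lang) :
    ∃ q, PosBool.Sat {q} A.init ∧ A.AcceptsFrom w (q, 0) := by
  obtain ⟨r, hr⟩ := hw
  have step_child : ∀ t, t ∈ r.tree ∧ t ≠ [] → ∃ t', (t' ∈ r.tree ∧ t' ≠ []) ∧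
      (∃ m, t' = t ++ [m]) ∧ A.Step w (r.label t, r.cnt t) (r.label t', r.cnt t') := by
    rintro t ⟨ht, hne⟩
    obtain ⟨d, hcnt, hsat⟩ := r.step t ht hne
    obtain ⟨_, ⟨m, hm, rfl⟩, hq⟩ := (hA.2 _ _ _).exists_sat_singleton hsat
    exact ⟨t ++ [m], ⟨hm, by simp⟩, ⟨m, rfl⟩, d, hcnt m hm, hq⟩
  obtain ⟨_, ⟨m, hm, rfl⟩, hq⟩ := hA.1.exists_sat_singleton r.init_sat
  obtain ⟨f, hf0, hf⟩ := exists_seq_of_forall_exists_rel step_child (a := [m]) ⟨hm, by simp⟩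
  refine ⟨r.label [m], hq, fun k => (r.label (f k), r.cnt (f k)), ?_, fun k => (hf k).2.2, ?_⟩
  · show (r.label (f 0), r.cnt (f 0)) = _
    rw [hf0, r.cnt_init [m] hm (by simp)]
  · let p : ℕ → List ℕ := fun i => match i with | 0 => [] | k + 1 => f k
    have hp : r.IsPath p := ⟨rfl, fun i => ?_⟩
    · have := hr p hp
      change Even (sInf (infOcc fun i => A.prio (r.label (p i)))) at this
      rwa [← infOcc_comp_succ] at this
    · cases i with
      | zero => exact ⟨⟨m, hf0⟩, (hf 0).1.1⟩
      | succ k => exact ⟨(hf k).2.1, (hf (k + 1)).1.1⟩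

theorem mem_lang_iff (hA : A.IsNondet) :
    w ∈ A.lang ↔ ∃ q, PosBool.Sat {q} A.init ∧ A.AcceptsFrom w (q, 0) :=
  ⟨exists_acceptsFrom_of_mem_lang hA, fun ⟨_, hq, h⟩ => mem_lang_of_acceptsFrom hq h⟩

end AAPA

section PaddedWords

open Function

variable {σ : Type*} (w : Fin 2 → ℕ → Option σ)

def AgreesBelow (L : Fin 2 → List σ) (c : Fin 2 → ℕ) : Prop :=
  ∀ e, (L e).length ≤ c e ∧ ∀ i < c e, w e i = padWord (L e) i

def RestEq (c : Fin 2 → ℕ) (l : Fin 2 → List σ) : Prop := ∀ e i, w e (c e + i) = (l e)[i]?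

variable {w}

theorem AgreesBelow.read_none {L : Fin 2 → List σ} {c : Fin 2 → ℕ} {d : Fin 2}
    (h : AgreesBelow w L c) (hw : w d (c d) = none) : AgreesBelow w L (update c d (c d + 1)) := by
  intro e
  rcases eq_or_ne e d with rfl | he
  · obtain ⟨hlen, hagree⟩ := h e
    refine ⟨by rw [update_self]; omega, fun i hi => ?_⟩
    rw [update_self] at hi
    rcases Nat.lt_succ_iff_lt_or_eq.1 hi with hi | rfl
    · exact hagree i hi
    · rw [hw, padWord, List.getElem?_eq_none hlen]
  · rw [update_of_ne he]
    exact h e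

theorem RestEq.read {c : Fin 2 → ℕ} {p W : Fin 2 → List σ} {d : Fin 2}
    (h : RestEq w c fun e => p e ++ W e) (hd : p d ≠ []) :
    w d (c d) = (p d).head? ∧
      RestEq w (update c d (c d + 1)) fun e => update p d (p d).tail e ++ W e := by
  obtain ⟨a, t, hat⟩ := List.exists_cons_of_ne_nil hd
  refine ⟨by simpa [hat] using h d 0, fun e i => ?_⟩
  beta_reduce
  rcases eq_or_ne e d with rfl | he
  · rw [update_self, update_self, show c e + 1 + i = c e + (i + 1) by ring, h e]
    simp [hat]
  · rw [update_of_ne he, update_of_ne he]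
    exact h e i

end PaddedWords

section Tiles

open PosBool Function

variable {σ ι : Type*}

/-- `pending x`: the words `x 0` and `x 1` of the current tile are still to be read on the two
tapes (`pending fun _ => []` sits between two tiles); `bot d`: only `⊥` is left, to be read next
in direction `d`. -/
inductive TileState (σ : Type*)
  | pending (x : Fin 2 → List σ)
  | bot (d : Fin 2)

open TileState

variable (tile : ι → Fin 2 → List σ)

def tileWord (js : List ι) (e : Fin 2) : List σ := (js.map (tile · e)).flatten

def tileSuffixes (e : Fin 2) : Set (List σ) := {u | u = [] ∨ ∃ j, u <:+ tile j e}

def TileState.Valid : TileState σ → Prop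
  | pending x => ∀ e, x e ∈ tileSuffixes tile e
  | bot _ => True

abbrev ValidTileState := {q : TileState σ // q.Valid tile}

abbrev TileConfig := ValidTileState tile × (Fin 2 → ℕ)

variable {tile}

theorem TileState.Valid.update_tail {x : Fin 2 → List σ} (hx : (pending x).Valid tile)
    (d : Fin 2) : (pending (update x d (x d).tail)).Valid tile := by
  intro e
  rcases eq_or_ne e d with rfl | he
  · rw [update_self]
    rcases hx e with h | ⟨j, hj⟩
    · exact Or.inl (by rw [h]; rfl)
    · exact Or.inr ⟨j, (List.tail_suffix _).trans hj⟩
  · rw [update_of_ne he]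
    exact hx e

variable (tile)

theorem TileState.valid_pending_tile (j : ι) : (pending (tile j)).Valid tile :=
  fun _ => Or.inr ⟨j, List.suffix_refl _⟩

theorem TileState.valid_pending_nil : (pending fun _ => []).Valid tile :=
  fun _ => Or.inl rfl

theorem finite_setOf_valid [Finite ι] : {q : TileState σ | q.Valid tile}.Finite := by
  have hsuff : ∀ e, (tileSuffixes tile e).Finite := fun e => by
    have : tileSuffixes tile e = insert [] (⋃ j, {u | u ∈ (tile j e).tails}) := by
      ext u
      simp [tileSuffixes, List.mem_tails]
    rw [this]
    exact (Set.finite_iUnion fun j => List.finite_toSet _).insert []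
  refine (((Set.Finite.pi hsuff).image pending).union (Set.finite_range bot)).subset ?_
  rintro (x | d) hq
  · exact Or.inl ⟨x, fun e _ => hq e, rfl⟩
  · exact Or.inr ⟨d, rfl⟩

instance [Finite ι] : Finite (ValidTileState tile) := (finite_setOf_valid tile).to_subtype

open Classical in
noncomputable def readMove (x : Fin 2 → List σ) (hx : (pending x).Valid tile) (ℓ : Option σ)
    (d : Fin 2) : PosBool (ValidTileState tile) :=
  if x d ≠ [] ∧ ℓ = (x d).head? then
    var ⟨pending (update x d (x d).tail), hx.update_tail d⟩
  else ff

open Classical in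
noncomputable def botMove (ℓ : Option σ) (d : Fin 2) : PosBool (ValidTileState tile) :=
  if ℓ = none then var ⟨bot d.rev, trivial⟩ else ff

open Classical in
noncomputable def tileAut [Fintype ι] (init : PosBool (ValidTileState tile)) :
    AAPA (Option σ) (ValidTileState tile) 2 where
  init := init
  trans
    -- every step consumes a letter, so the next tile is entered by reading its first letter
    | ⟨pending x, hx⟩, ℓ, d =>
      if x = fun _ => [] then
        (bigOr Finset.univ.toList fun j =>
          readMove tile (tile j) (valid_pending_tile tile j) ℓ d).or (botMove tile ℓ d)
      else readMove tile x hx ℓ d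
    | ⟨bot e, _⟩, ℓ, d => if d = e then botMove tile ℓ d else ff
  prio
    | ⟨pending _, _⟩ => 1
    | ⟨bot _, _⟩ => 0

variable {tile}

theorem sat_readMove {x : Fin 2 → List σ} {hx : (pending x).Valid tile} {ℓ : Option σ}
    {d : Fin 2} {q : ValidTileState tile} :
    Sat {q} (readMove tile x hx ℓ d) ↔
      x d ≠ [] ∧ ℓ = (x d).head? ∧ q.1 = pending (update x d (x d).tail) := by
  rw [readMove, sat_ite_ff, sat_singleton_var, Subtype.ext_iff, and_assoc]
  exact and_congr_right fun _ => and_congr_right fun _ => eq_comm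

theorem sat_botMove {ℓ : Option σ} {d : Fin 2} {q : ValidTileState tile} :
    Sat {q} (botMove tile ℓ d) ↔ ℓ = none ∧ q.1 = bot d.rev := by
  rw [botMove, sat_ite_ff, sat_singleton_var, Subtype.ext_iff]
  exact and_congr_right fun _ => eq_comm

theorem isNondet_tileAut [Fintype ι] {init : PosBool (ValidTileState tile)} (h : init.IsDisj) :
    (tileAut tile init).IsNondet := by
  refine ⟨h, ?_⟩
  rintro ⟨_ | e, hq⟩ ℓ d
  · dsimp only [tileAut]
    split_ifs
    · exact .or (.bigOr fun _ _ => IsDisj.ite_ff (.var _)) (IsDisj.ite_ff (.var _))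
    · exact IsDisj.ite_ff (.var _)
  · exact IsDisj.ite_ff (IsDisj.ite_ff (.var _))

end Tiles

section TileInvariants

open TileState Function

variable {σ ι : Type*} (tile : ι → Fin 2 → List σ) (w : Fin 2 → ℕ → Option σ)

def PendingInv (x₀ : Fin 2 → List σ) (js : List ι) (x : Fin 2 → List σ)
    (c : Fin 2 → ℕ) : Prop :=
  ∀ e, (List.range (c e)).map (w e) ++ (x e).map some = (x₀ e ++ tileWord tile js e).map some

def RunInv (x₀ : Fin 2 → List σ) : TileConfig tile → Prop
  | (⟨pending x, _⟩, c) => ∃ js, PendingInv tile w x₀ js x c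
  | (⟨bot _, _⟩, c) => ∃ js, AgreesBelow w (fun e => x₀ e ++ tileWord tile js e) c

variable {tile w}

theorem PendingInv.read {x₀ x : Fin 2 → List σ} {js : List ι} {c : Fin 2 → ℕ} {d : Fin 2}
    (h : PendingInv tile w x₀ js x c) (hd : x d ≠ []) (hw : w d (c d) = (x d).head?) :
    PendingInv tile w x₀ js (update x d (x d).tail) (update c d (c d + 1)) := by
  intro e
  rcases eq_or_ne e d with rfl | he
  · obtain ⟨a, t, hat⟩ := List.exists_cons_of_ne_nil hd
    rw [← h e, update_self, update_self, List.range_succ, List.map_append, List.map_singleton, hw,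
      hat]
    simp
  · rw [update_of_ne he, update_of_ne he]
    exact h e

theorem PendingInv.start {x₀ : Fin 2 → List σ} {js : List ι} {c : Fin 2 → ℕ}
    (h : PendingInv tile w x₀ js (fun _ => []) c) (j : ι) :
    PendingInv tile w x₀ (js ++ [j]) (tile j) c := fun e => by
  simpa [tileWord] using congrArg (· ++ (tile j e).map some) (h e)

theorem PendingInv.agreesBelow {x₀ : Fin 2 → List σ} {js : List ι} {c : Fin 2 → ℕ}
    (h : PendingInv tile w x₀ js (fun _ => []) c) :
    AgreesBelow w (fun e => x₀ e ++ tileWord tile js e) c := fun e => by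
  set L := x₀ e ++ tileWord tile js e
  have he : (List.range (c e)).map (w e) = L.map some := by
    simpa only [List.map_nil, List.append_nil] using h e
  have hlen : L.length = c e := by simpa using (congrArg List.length he).symm
  refine ⟨hlen.le, fun i hi => ?_⟩
  have := congrArg (·[i]?) he
  simp only [List.getElem?_map, List.getElem?_range hi,
    List.getElem?_eq_getElem (hlen ▸ hi)] at this
  show w e i = L[i]?
  rw [List.getElem?_eq_getElem (hlen ▸ hi)]
  simpa using this

theorem RunInv.exists_agreesBelow {x₀ : Fin 2 → List σ} {y : TileConfig tile} {d : Fin 2}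
    (h : RunInv tile w x₀ y) (hy : y.1.1 = bot d) :
    ∃ js, AgreesBelow w (fun e => x₀ e ++ tileWord tile js e) y.2 := by
  obtain ⟨⟨q, _⟩, c⟩ := y
  dsimp only at hy
  subst hy
  exact h

end TileInvariants

section TileLanguage

open PosBool TileState Function

variable {σ ι : Type*} [Fintype ι] {tile : ι → Fin 2 → List σ}
  {init : PosBool (ValidTileState tile)} {w : Fin 2 → ℕ → Option σ}

theorem step_of_bot {y y' : TileConfig tile} {d : Fin 2} (hy : y.1.1 = bot d)
    (hs : (tileAut tile init).Step w y y') :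
    y'.1.1 = bot d.rev ∧ y'.2 = update y.2 d (y.2 d + 1) ∧ w d (y.2 d) = none := by
  obtain ⟨⟨q, hq⟩, c⟩ := y
  obtain ⟨d', hc, hsat⟩ := hs
  dsimp only at hy
  subst hy
  obtain ⟨rfl, hsat⟩ := sat_ite_ff.1 hsat
  obtain ⟨hw, hq'⟩ := sat_botMove.1 hsat
  exact ⟨hq', hc, hw⟩

theorem step_pending_read {x : Fin 2 → List σ} {hx : (pending x).Valid tile} {c : Fin 2 → ℕ}
    {d : Fin 2} (hnil : x ≠ fun _ => []) (hd : x d ≠ []) (hw : w d (c d) = (x d).head?) :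
    (tileAut tile init).Step w (⟨pending x, hx⟩, c)
      (⟨pending (update x d (x d).tail), hx.update_tail d⟩, update c d (c d + 1)) := by
  refine ⟨d, rfl, ?_⟩
  simp only [tileAut, hnil, if_false]
  exact sat_readMove.2 ⟨hd, hw, rfl⟩

theorem step_pending_nil_start {c : Fin 2 → ℕ} {d : Fin 2} (j : ι) (hd : tile j d ≠ [])
    (hw : w d (c d) = (tile j d).head?) :
    (tileAut tile init).Step w (⟨pending fun _ => [], valid_pending_nil tile⟩, c)
      (⟨pending (update (tile j) d (tile j d).tail), (valid_pending_tile tile j).update_tail d⟩,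
        update c d (c d + 1)) := by
  refine ⟨d, rfl, ?_⟩
  simp only [tileAut, if_true]
  exact Or.inl (sat_bigOr.2 ⟨j, by simp, sat_readMove.2 ⟨hd, hw, rfl⟩⟩)

theorem step_pending_nil_bot {c : Fin 2 → ℕ} {d : Fin 2} (hw : w d (c d) = none) :
    (tileAut tile init).Step w (⟨pending fun _ => [], valid_pending_nil tile⟩, c)
      (⟨bot d.rev, trivial⟩, update c d (c d + 1)) := by
  refine ⟨d, rfl, ?_⟩
  simp only [tileAut, if_true]
  exact Or.inr (sat_botMove.2 ⟨hw, rfl⟩)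

theorem step_bot {c : Fin 2 → ℕ} {d : Fin 2} (hw : w d (c d) = none) :
    (tileAut tile init).Step w (⟨bot d, trivial⟩, c)
      (⟨bot d.rev, trivial⟩, update c d (c d + 1)) :=
  ⟨d, rfl, sat_ite_ff.2 ⟨rfl, sat_botMove.2 ⟨hw, rfl⟩⟩⟩

theorem RunInv.step {x₀ : Fin 2 → List σ} {y y' : TileConfig tile}
    (h : RunInv tile w x₀ y) (hs : (tileAut tile init).Step w y y') : RunInv tile w x₀ y' := by
  obtain ⟨⟨_ | d, hq⟩, c⟩ := y
  · obtain ⟨js, hinv⟩ := h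
    obtain ⟨d, hc, hsat⟩ := hs
    obtain ⟨⟨q', hq'⟩, c'⟩ := y'
    dsimp only at hc
    subst hc
    simp only [tileAut] at hsat
    split_ifs at hsat with hnil
    · subst hnil
      rcases hsat with hsat | hsat
      · obtain ⟨j, -, hsat⟩ := sat_bigOr.1 hsat
        obtain ⟨hd, hw, rfl⟩ := sat_readMove.1 hsat
        exact ⟨js ++ [j], (hinv.start j).read hd hw⟩
      · obtain ⟨hw, rfl⟩ := sat_botMove.1 hsat
        exact ⟨js, hinv.agreesBelow.read_none hw⟩
    · obtain ⟨hd, hw, rfl⟩ := sat_readMove.1 hsat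
      exact ⟨js, hinv.read hd hw⟩
  · obtain ⟨hq', hc, hw⟩ := step_of_bot (d := d) rfl hs
    obtain ⟨⟨q', _⟩, c'⟩ := y'
    dsimp only at hq' hc hw
    subst hq' hc
    obtain ⟨js, hjs⟩ := h
    exact ⟨js, hjs.read_none hw⟩

theorem exists_bot_of_even_sInf {tr : ℕ → TileConfig tile}
    (hacc : Even (sInf (infOcc fun k => (tileAut tile init).prio (tr k).1))) :
    ∃ N d, (tr N).1.1 = bot d := by
  by_contra! hpending
  have prio_one : ∀ q : ValidTileState tile, (∀ d, q.1 ≠ bot d) →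
      (tileAut tile init).prio q = 1 := by
    rintro ⟨_ | d, _⟩ hq
    · rfl
    · exact absurd rfl (hq d)
  rw [show (fun k => (tileAut tile init).prio (tr k).1) = fun _ => 1 from
    funext fun k => prio_one _ (hpending k), infOcc_const, csInf_singleton] at hacc
  exact Nat.not_even_one hacc

theorem counter_add_two_of_bot {y y' y'' : TileConfig tile} {d : Fin 2}
    (hy : y.1.1 = bot d) (hs : (tileAut tile init).Step w y y')
    (hs' : (tileAut tile init).Step w y' y'') : ∀ e, y''.2 e = y.2 e + 1 := by
  obtain ⟨hy', hc', -⟩ := step_of_bot hy hs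
  obtain ⟨-, hc'', -⟩ := step_of_bot hy' hs'
  intro e
  rw [hc'', hc']
  fin_cases d <;> fin_cases e <;> simp [Fin.rev]

theorem eq_padWord_of_bot {tr : ℕ → TileConfig tile}
    (hstep : ∀ k, (tileAut tile init).Step w (tr k) (tr (k + 1))) {N : ℕ} {d : Fin 2}
    (hN : (tr N).1.1 = bot d) {L : Fin 2 → List σ} (hL : AgreesBelow w L (tr N).2) :
    ∀ e, w e = padWord (L e) := by
  have tail : ∀ m, (∃ d, (tr (N + m)).1.1 = bot d) ∧ AgreesBelow w L (tr (N + m)).2 := by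
    intro m
    induction m with
    | zero => exact ⟨⟨d, hN⟩, hL⟩
    | succ m ih =>
      obtain ⟨⟨d, hd⟩, hL⟩ := ih
      obtain ⟨hd', hc, hw⟩ := step_of_bot hd (hstep (N + m))
      exact ⟨⟨_, hd'⟩, hc ▸ hL.read_none hw⟩
  have grow : ∀ m e, m ≤ (tr (N + 2 * m)).2 e := by
    intro m
    induction m with
    | zero => simp
    | succ m ih =>
      intro e
      obtain ⟨⟨d, hd⟩, -⟩ := tail (2 * m)
      have := counter_add_two_of_bot hd (hstep _) (hstep _) e
      rw [show N + 2 * (m + 1) = N + 2 * m + 1 + 1 by ring, this]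
      exact Nat.succ_le_succ (ih e)
  intro e
  funext i
  exact ((tail (2 * (i + 1))).2 e).2 i (grow (i + 1) e)

theorem AAPA.AcceptsFrom.exists_tileWord {x₀ : Fin 2 → List σ}
    {hx₀ : (pending x₀).Valid tile}
    (h : (tileAut tile init).AcceptsFrom w (⟨pending x₀, hx₀⟩, 0)) :
    ∃ js, ∀ e, w e = padWord (x₀ e ++ tileWord tile js e) := by
  obtain ⟨tr, h0, hstep, hacc⟩ := h
  have hinv : ∀ k, RunInv tile w x₀ (tr k) := by
    intro k
    induction k with
    | zero => rw [h0]; exact ⟨[], fun e => by simp [tileWord]⟩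
    | succ k ih => exact ih.step (hstep k)
  obtain ⟨N, d, hN⟩ := exists_bot_of_even_sInf hacc
  obtain ⟨js, hjs⟩ := (hinv N).exists_agreesBelow hN
  exact ⟨js, eq_padWord_of_bot hstep hN hjs⟩

theorem acceptsFrom_bot {c : Fin 2 → ℕ} {d : Fin 2} (h : ∀ e i, c e ≤ i → w e i = none) :
    (tileAut tile init).AcceptsFrom w (⟨bot d, trivial⟩, c) := by
  refine AAPA.acceptsFrom_of_forall_exists_step
    (fun y => (∃ d, y.1.1 = bot d) ∧ ∀ e i, y.2 e ≤ i → w e i = none) ?_ ?_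
    ⟨⟨d, rfl⟩, h⟩
  · rintro ⟨⟨q, hq⟩, c⟩ ⟨⟨d, hd⟩, hnone⟩
    dsimp only at hd hnone
    subst hd
    refine ⟨_, ⟨⟨d.rev, rfl⟩, fun e i hi => hnone e i ?_⟩, step_bot (hnone d _ le_rfl)⟩
    exact (AAPA.le_update_add_one c d e).trans hi
  · rintro ⟨⟨q, hq⟩, c⟩ ⟨⟨d, hd⟩, -⟩
    dsimp only at hd
    subst hd
    rfl

theorem acceptsFrom_pending_of_nil {W : Fin 2 → List σ}
    (hnil : ∀ c, RestEq w c W →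
      (tileAut tile init).AcceptsFrom w (⟨pending fun _ => [], valid_pending_nil tile⟩, c))
    (x : Fin 2 → List σ) (hx : (pending x).Valid tile) (c : Fin 2 → ℕ)
    (h : RestEq w c fun e => x e ++ W e) :
    (tileAut tile init).AcceptsFrom w (⟨pending x, hx⟩, c) := by
  induction hn : (x 0).length + (x 1).length using Nat.strong_induction_on
    generalizing x c with
  | _ n ih =>
    by_cases hx0 : x = fun _ => []
    · subst hx0
      exact hnil c (by simpa using h)
    · obtain ⟨d, hd⟩ : ∃ d, x d ≠ [] := by
        by_contra! hx'
        exact hx0 (funext hx')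
      obtain ⟨hw, h'⟩ := h.read hd
      refine .of_step (step_pending_read hx0 hd hw) (ih _ ?_ _ _ _ h' rfl)
      have := List.length_pos_iff.2 hd
      rw [← hn]
      rcases (by omega : d = 0 ∨ d = 1) with rfl | rfl <;> simp <;> omega

theorem acceptsFrom_pending_nil (js : List ι) (c : Fin 2 → ℕ)
    (h : RestEq w c (tileWord tile js)) :
    (tileAut tile init).AcceptsFrom w (⟨pending fun _ => [], valid_pending_nil tile⟩, c) := by
  induction js generalizing c with
  | nil =>
    have hnone : ∀ e i, c e ≤ i → w e i = none := fun e i hi => by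
      simpa [Nat.add_sub_cancel' hi, tileWord] using h e (i - c e)
    refine .of_step (step_pending_nil_bot (d := 0) (hnone 0 _ le_rfl)) (acceptsFrom_bot ?_)
    exact fun e i hi => hnone e i ((AAPA.le_update_add_one c 0 e).trans hi)
  | cons j js ih =>
    by_cases hj : tile j = fun _ => []
    · exact ih c (by simpa [RestEq, tileWord, hj] using h)
    · obtain ⟨d, hd⟩ : ∃ d, tile j d ≠ [] := by
        by_contra! hj'
        exact hj (funext hj')
      obtain ⟨hw, h'⟩ := RestEq.read (W := tileWord tile js) h hd
      exact .of_step (step_pending_nil_start j hd hw) (acceptsFrom_pending_of_nil ih _ _ _ h')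

theorem acceptsFrom_pending_iff {x₀ : Fin 2 → List σ} {hx₀ : (pending x₀).Valid tile} :
    (tileAut tile init).AcceptsFrom w (⟨pending x₀, hx₀⟩, 0) ↔
      ∃ js, ∀ e, w e = padWord (x₀ e ++ tileWord tile js e) := by
  refine ⟨AAPA.AcceptsFrom.exists_tileWord, fun ⟨js, h⟩ => ?_⟩
  exact acceptsFrom_pending_of_nil (acceptsFrom_pending_nil js) x₀ hx₀ 0
    fun e i => by simp [h e, padWord]

end TileLanguage

section PCP

open PosBool TileState

variable {σ : Type}

theorem padWord_injective : Function.Injective (padWord (σ := σ)) :=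
  fun _ _ h => List.ext_getElem? (congrFun h)

theorem pcpSolvable_iff_inter_nonempty (I : List (List σ × List σ)) :
    PCPSolvable I ↔ (pcpL₁ I ∩ pcpL₂ σ).Nonempty := by
  constructor
  · rintro ⟨js, hne, heq⟩
    exact ⟨fun _ => padWord _, ⟨js, hne, rfl, by rw [heq]⟩, _, rfl, rfl⟩
  · rintro ⟨w, ⟨js, hne, h0, h1⟩, v, h0', h1'⟩
    exact ⟨js, hne, (padWord_injective (h0.symm.trans h0')).trans
      (padWord_injective (h1.symm.trans h1')).symm⟩

def pcpTile (I : List (List σ × List σ)) (j : Fin I.length) : Fin 2 → List σ :=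
  ![(I.get j).1, (I.get j).2]

noncomputable def pcpAut (I : List (List σ × List σ)) :
    AAPA (Option σ) (ValidTileState (pcpTile I)) 2 :=
  tileAut (pcpTile I)
    (bigOr Finset.univ.toList fun j => var ⟨pending (pcpTile I j), valid_pending_tile _ j⟩)

theorem isNondet_pcpAut (I : List (List σ × List σ)) : (pcpAut I).IsNondet :=
  isNondet_tileAut (.bigOr fun _ _ => .var _)

theorem lang_pcpAut (I : List (List σ × List σ)) : (pcpAut I).lang = pcpL₁ I := by
  ext w
  rw [AAPA.mem_lang_iff (isNondet_pcpAut I)]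
  constructor
  · rintro ⟨q, hq, hacc⟩
    obtain ⟨j, -, rfl⟩ := sat_bigOr.1 hq
    obtain ⟨js, h⟩ := acceptsFrom_pending_iff.1 hacc
    exact ⟨j :: js, List.cons_ne_nil _ _, by simpa [pcpTile, tileWord] using h 0,
      by simpa [pcpTile, tileWord] using h 1⟩
  · rintro ⟨_ | ⟨j, js⟩, hne, h0, h1⟩
    · exact absurd rfl hne
    · refine ⟨_, sat_bigOr.2 ⟨j, by simp, rfl⟩,
        acceptsFrom_pending_iff.2 ⟨js, Fin.forall_fin_two.2 ⟨?_, ?_⟩⟩⟩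
      · simpa [pcpTile, tileWord] using h0
      · simpa [pcpTile, tileWord] using h1

def diagTile (a : σ) : Fin 2 → List σ := fun _ => [a]

@[simp]
theorem tileWord_diagTile (v : List σ) (e : Fin 2) : tileWord diagTile v e = v := by
  simp [tileWord, diagTile, ← List.flatMap_def]

noncomputable def diagAut (σ : Type) [Fintype σ] :
    AAPA (Option σ) (ValidTileState (diagTile (σ := σ))) 2 :=
  tileAut diagTile (var ⟨pending fun _ => [], valid_pending_nil _⟩)

theorem isNondet_diagAut [Fintype σ] : (diagAut σ).IsNondet := isNondet_tileAut (.var _)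

theorem lang_diagAut [Fintype σ] : (diagAut σ).lang = pcpL₂ σ := by
  ext w
  rw [AAPA.mem_lang_iff isNondet_diagAut]
  constructor
  · rintro ⟨q, rfl, hacc⟩
    obtain ⟨v, h⟩ := acceptsFrom_pending_iff.1 hacc
    exact ⟨v, by simpa using h 0, by simpa using h 1⟩
  · rintro ⟨v, h0, h1⟩
    exact ⟨_, rfl, acceptsFrom_pending_iff.2
      ⟨v, Fin.forall_fin_two.2 ⟨by simpa using h0, by simpa using h1⟩⟩⟩

end PCP

/-- For a PCP instance `I` over `σ` and the fresh symbol `⊥` (here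
`none` in `Option σ`): (i) the languages `L₁` and `L₂` are each recognized by a NAPA
over `σ ∪ {⊥}` with two directions, and (ii) `I` has a solution iff `L₁ ∩ L₂ ≠ ∅`. -/
theorem pcp_languages_napa_and_intersection
    (σ : Type) [Fintype σ] (I : List (List σ × List σ)) :
    (∃ (Q₁ : Type) (_ : Fintype Q₁) (_ : Nonempty Q₁) (A₁ : AAPA (Option σ) Q₁ 2),
        A₁.IsNondet ∧ A₁.lang = pcpL₁ I) ∧
    (∃ (Q₂ : Type) (_ : Fintype Q₂) (_ : Nonempty Q₂) (A₂ : AAPA (Option σ) Q₂ 2),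
        A₂.IsNondet ∧ A₂.lang = pcpL₂ σ) ∧
    (PCPSolvable I ↔ (pcpL₁ I ∩ pcpL₂ σ).Nonempty) :=
  ⟨⟨_, .ofFinite _, ⟨⟨.bot 0, trivial⟩⟩, pcpAut I, isNondet_pcpAut I, lang_pcpAut I⟩,
    ⟨_, .ofFinite _, ⟨⟨.bot 0, trivial⟩⟩, diagAut σ, isNondet_diagAut, lang_diagAut⟩,
    pcpSolvable_iff_inter_nonempty I⟩
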